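/- arXiv:2212.02972 — 2 statements merged into one kernel-verified Lean document; each statement's English description precedes it below -/
import Mathlib

section
/- Let n = m(q−1) with m ≥ 1. There exists a unique polynomial g_n ∈ 𝔽[θ,t] such that ‖g_n − ω_n‖ < 1. Moreover, deg_θ(g_n) = m, and g_{pn} = (g_n)^p (where g_{pn} is the unique polynomial in 𝔽[θ,t] with ‖g_{pn} − ω_{pn}‖ < 1). -/
open scoped Classical ENNReal
open Filter

noncomputable section

namespace Carlitz

variable (F : Type) [Field F] [Fintype F]

/-- `K∞ = 𝔽((1/θ))`, realized as the field of formal Laurent series over `F`;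
the Laurent-series variable plays the role of `1/θ`. -/
abbrev Kinf := LaurentSeries F

/-- `θ ∈ K∞`, the inverse of the Laurent-series variable. -/
def theta : Kinf F := HahnSeries.single (-1 : ℤ) (1 : F)

/-- The absolute value `|x| = q ^ (deg_θ x)`, with values in `ℝ≥0∞`. -/
def Kabs {R : Type} [Zero R] (q : ℕ) (x : HahnSeries ℤ R) : ℝ≥0∞ :=
  if x = 0 then 0 else (q : ℝ≥0∞) ^ (-x.order)

/-- The ambient ring of the Tate algebra: formal power series in `t` over `K∞`. -/
abbrev TS := PowerSeries (Kinf F)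

/-- The `i`-th `t`-coefficient. -/
def coeffT (i : ℕ) (f : TS F) : Kinf F := PowerSeries.coeff (R := Kinf F) i f

/-- Membership in the Tate algebra `K∞⟨t⟩`: the coefficients tend to `0`. -/
def IsTate (f : TS F) : Prop :=
  Tendsto (fun i => Kabs (Fintype.card F) (coeffT F i f)) atTop (nhds 0)

/-- The Gauss norm `‖f‖ = sup_i |a_i|`. -/
def gnorm (f : TS F) : ℝ≥0∞ := ⨆ i, Kabs (Fintype.card F) (coeffT F i f)

/-- The twist `f ↦ f⁽¹⁾`: the coefficientwise `q`-power Frobenius. -/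
def twist (f : TS F) : TS F := PowerSeries.mk fun i => coeffT F i f ^ Fintype.card F

/-- The iterated twist `f ↦ f⁽ᵏ⁾`. -/
def twistIter (k : ℕ) (f : TS F) : TS F := (twist F)^[k] f

/-- The variable `t` of the Tate algebra. -/
def tt : TS F := PowerSeries.X

/-- `θ`, viewed as a constant of `K∞⟨t⟩`. -/
def th : TS F := PowerSeries.C (R := Kinf F) (theta F)

/-- The embedding `𝔽[θ] → K∞` sending the polynomial variable to `θ`. -/
def polyK : Polynomial F →+* Kinf F :=
  Polynomial.eval₂RingHom (HahnSeries.C : F →+* Kinf F) (theta F)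

/-- The embedding `𝔽[θ][t] → K∞⟨t⟩`: the outer variable goes to `t`,
the inner variable goes to `θ`. -/
def polyT : Polynomial (Polynomial F) →+* TS F :=
  Polynomial.eval₂RingHom ((PowerSeries.C (R := Kinf F)).comp (polyK F)) PowerSeries.X

/-- The subring `𝔽[θ,t] ⊆ K∞⟨t⟩`. -/
def PolyTT : Set (TS F) := Set.range (polyT F)

/-- The subset of `𝔽[θ,t]` of elements of `θ`-degree `< n`. -/
def PolyDegLt (n : ℕ) : Set (TS F) :=
  {f | ∃ P : Polynomial (Polynomial F), (∀ i, (P.coeff i).degree < (n : ℕ)) ∧ f = polyT F P}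

/-- The action of `𝔽[t]` on `K∞⟨t⟩`: `a • f` is `actT a * f`. -/
def actT : Polynomial F →+* TS F :=
  Polynomial.eval₂RingHom ((PowerSeries.C (R := Kinf F)).comp (HahnSeries.C : F →+* Kinf F))
    PowerSeries.X

/-- Convergence in `K∞⟨t⟩` with respect to the Gauss norm:
`L` is the limit of the sequence `s`. -/
def TT (s : ℕ → TS F) (L : TS F) : Prop :=
  Tendsto (fun N => gnorm F (L - s N)) atTop (nhds 0)

/-- Convergence in `K∞`: `L` is the limit of the sequence `s`. -/
def KT (q : ℕ) (s : ℕ → Kinf F) (L : Kinf F) : Prop :=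
  Tendsto (fun N => Kabs q (L - s N)) atTop (nhds 0)

/-- Partial products defining `ν_n = (−θ)^{−h} ∏_{j≥0} (1 − t·θ^{−qʲ})ⁿ`,
where `n = h(q−1) + δ`. -/
def nuPartial (n h N : ℕ) : TS F :=
  PowerSeries.C (R := Kinf F) ((-theta F)⁻¹ ^ h) *
    ∏ j ∈ Finset.range N,
      (1 - tt F * PowerSeries.C (R := Kinf F) ((theta F)⁻¹ ^ Fintype.card F ^ j)) ^ n

/-- Partial products defining `ω_n = (−θ)^m ∏_{i≥0} (1 − t·θ^{−qⁱ})^{−n}`,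
where `n = m(q−1)`; `ω_n` is the `n`-th power of the Anderson–Thakur function. -/
def omegaPartial (n m N : ℕ) : TS F :=
  PowerSeries.C (R := Kinf F) ((-theta F) ^ m) *
    ∏ i ∈ Finset.range N,
      ((1 - tt F * PowerSeries.C (R := Kinf F) ((theta F)⁻¹ ^ Fintype.card F ^ i)) ^ n)⁻¹

/-- Partial sums defining `ξ_e = ∑_{k≥0} e⁽ᵏ⁾ ∏_{i=0}^{k} (t−θ^{qⁱ})^{−n}`. -/
def xiPartial (n : ℕ) (e : TS F) (N : ℕ) : TS F :=
  ∑ k ∈ Finset.range N, twistIter F k e *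
    (∏ i ∈ Finset.range (k + 1),
      (tt F - PowerSeries.C (R := Kinf F) (theta F ^ Fintype.card F ^ i)) ^ n)⁻¹

/-- Partial sums defining `s_h = h + ∑_{i≥1} h⁽ⁱ⁾ ∏_{j=0}^{i−1} (t−θ^{qʲ})^{−n}`. -/
def sPartial (n : ℕ) (h : TS F) (N : ℕ) : TS F :=
  ∑ i ∈ Finset.range N, twistIter F i h *
    (∏ j ∈ Finset.range i,
      (tt F - PowerSeries.C (R := Kinf F) (theta F ^ Fintype.card F ^ j)) ^ n)⁻¹

/-- The map `β : f ↦ f − (t−θ)ⁿ f⁽¹⁾`. -/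
def beta (n : ℕ) (f : TS F) : TS F := f - (tt F - th F) ^ n * twist F f

/-- The set of integral extension representatives
`X_n = {ξ ∈ K∞⟨t⟩ : (t−θ)ⁿ ξ − ξ⁽¹⁾ ∈ 𝔽[θ,t]}`. -/
def Xset (n : ℕ) : Set (TS F) :=
  {ξ | IsTate F ξ ∧ (tt F - th F) ^ n * ξ - twist F ξ ∈ PolyTT F}

end Carlitz

/-!
Write `q = #𝔽`. The Gauss norm is nonarchimedean and submultiplicative, and a nonzero element of
`𝔽[θ,t]` has norm `≥ 1`; hence there is at most one polynomial within distance `< 1` of `ω`.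
Every factor `(1 - t θ^{-qⁱ})^{-n}` is a geometric-type series of norm `≤ 1`, so `‖ω‖ ≤ |θ|^m`:
every `t`-coefficient of `ω` is a Laurent series in `θ⁻¹` of `θ`-degree `≤ m`, and keeping its
polynomial part (for the finitely many coefficients of norm `≥ 1`) gives `g`. The constant term
of `ω` is `(-θ)^m` up to an error of norm `< 1`, which forces `deg_θ g = m`. Finally the partial
products of `ω_{pn}` are the `p`-th powers of those of `ω_n`, and `f ↦ f^p` is additive and
does not increase distances that are `< 1`, so `g^p` is the polynomial approximating `ω_{pn}`.
-/

namespace Carlitz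

section Kabs

variable {R : Type} {q : ℕ}

lemma natCast_zpow_le_natCast_zpow_iff (hq : 1 < q) {a b : ℤ} :
    (q : ℝ≥0∞) ^ a ≤ (q : ℝ≥0∞) ^ b ↔ a ≤ b := by
  have hq' : (1 : NNReal) < q := by exact_mod_cast hq
  have h0 : (q : NNReal) ≠ 0 := (zero_lt_one.trans hq').ne'
  rw [← ENNReal.coe_natCast, ← ENNReal.coe_zpow h0, ← ENNReal.coe_zpow h0, ENNReal.coe_le_coe,
    zpow_le_zpow_iff_right₀ hq']

lemma Kabs_zero [Zero R] : Kabs q (0 : HahnSeries ℤ R) = 0 := if_pos rfl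

lemma Kabs_of_ne_zero [Zero R] {x : HahnSeries ℤ R} (hx : x ≠ 0) :
    Kabs q x = (q : ℝ≥0∞) ^ (-x.order) := if_neg hx

lemma Kabs_le_zpow_iff [Zero R] (hq : 1 < q) {x : HahnSeries ℤ R} {d : ℤ} :
    Kabs q x ≤ (q : ℝ≥0∞) ^ d ↔ ∀ z < -d, x.coeff z = 0 := by
  rcases eq_or_ne x 0 with rfl | hx
  · simp [Kabs_zero]
  rw [Kabs_of_ne_zero hx, natCast_zpow_le_natCast_zpow_iff hq, neg_le,
    HahnSeries.le_order_iff_forall hx]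

lemma Kabs_lt_one_iff [Zero R] (hq : 1 < q) {x : HahnSeries ℤ R} :
    Kabs q x < 1 ↔ ∀ z < 1, x.coeff z = 0 := by
  rcases eq_or_ne x 0 with rfl | hx
  · simp [Kabs_zero]
  rw [Kabs_of_ne_zero hx, ← zpow_zero (q : ℝ≥0∞), ← not_le, natCast_zpow_le_natCast_zpow_iff hq,
    ← HahnSeries.le_order_iff_forall hx]
  omega

lemma Kabs_le_inv_of_lt_one [Zero R] (hq : 1 < q) {x : HahnSeries ℤ R} (hx : Kabs q x < 1) :
    Kabs q x ≤ (q : ℝ≥0∞)⁻¹ := by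
  rw [← zpow_neg_one, Kabs_le_zpow_iff hq, neg_neg]
  exact (Kabs_lt_one_iff hq).1 hx

lemma Kabs_neg [AddGroup R] (x : HahnSeries ℤ R) : Kabs q (-x) = Kabs q x := by
  simp only [Kabs, neg_eq_zero, HahnSeries.order_neg]

lemma Kabs_sub_comm [AddGroup R] (x y : HahnSeries ℤ R) : Kabs q (x - y) = Kabs q (y - x) := by
  rw [← neg_sub, Kabs_neg]

lemma isNonarchimedean_Kabs [AddMonoid R] (hq : 1 < q) :
    IsNonarchimedean (Kabs q : HahnSeries ℤ R → ℝ≥0∞) := by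
  intro x y
  rcases eq_or_ne x 0 with rfl | hx
  · simp
  rcases eq_or_ne y 0 with rfl | hy
  · simp
  rcases eq_or_ne (x + y) 0 with hxy | hxy
  · simp [hxy, Kabs_zero]
  have hmin := HahnSeries.min_order_le_order_add hxy
  rw [Kabs_of_ne_zero hx, Kabs_of_ne_zero hy, Kabs_of_ne_zero hxy]
  rcases min_choice x.order y.order with h | h <;> rw [h] at hmin
  · exact le_sup_of_le_left ((natCast_zpow_le_natCast_zpow_iff hq).2 (neg_le_neg hmin))
  · exact le_sup_of_le_right ((natCast_zpow_le_natCast_zpow_iff hq).2 (neg_le_neg hmin))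

lemma Kabs_mul [Ring R] [NoZeroDivisors R] (hq : q ≠ 0) (x y : HahnSeries ℤ R) :
    Kabs q (x * y) = Kabs q x * Kabs q y := by
  rcases eq_or_ne x 0 with rfl | hx
  · simp [Kabs_zero]
  rcases eq_or_ne y 0 with rfl | hy
  · simp [Kabs_zero]
  rw [Kabs_of_ne_zero hx, Kabs_of_ne_zero hy, Kabs_of_ne_zero (mul_ne_zero hx hy),
    HahnSeries.order_mul hx hy, neg_add, ENNReal.zpow_add (by exact_mod_cast hq)
      (ENNReal.natCast_ne_top q)]

lemma Kabs_one [Ring R] [Nontrivial R] : Kabs q (1 : HahnSeries ℤ R) = 1 := by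
  rw [Kabs_of_ne_zero one_ne_zero, HahnSeries.order_one, neg_zero, zpow_zero]

lemma Kabs_pow [Ring R] [NoZeroDivisors R] [Nontrivial R] (hq : q ≠ 0) (x : HahnSeries ℤ R)
    (k : ℕ) : Kabs q (x ^ k) = Kabs q x ^ k := by
  induction k with
  | zero => rw [pow_zero, pow_zero, Kabs_one]
  | succ k ih => rw [pow_succ, Kabs_mul hq, ih, pow_succ]

end Kabs

section Laurent

variable {F : Type} [Field F] {q : ℕ}

lemma Kabs_inv (hq : q ≠ 0) {x : Kinf F} (hx : x ≠ 0) : Kabs q x⁻¹ = (Kabs q x)⁻¹ := by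
  refine ENNReal.eq_inv_of_mul_eq_one_left ?_
  rw [← Kabs_mul hq, inv_mul_cancel₀ hx, Kabs_one]

lemma theta_ne_zero : theta F ≠ 0 := HahnSeries.single_ne_zero one_ne_zero

lemma Kabs_theta : Kabs q (theta F) = q := by
  rw [Kabs_of_ne_zero theta_ne_zero, theta, HahnSeries.order_single one_ne_zero, neg_neg, zpow_one]

lemma Kabs_theta_inv_pow_le_one (hq : q ≠ 0) (k : ℕ) : Kabs q ((theta F)⁻¹ ^ k) ≤ 1 := by
  rw [Kabs_pow hq, Kabs_inv hq theta_ne_zero, Kabs_theta]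
  exact pow_le_one₀ zero_le (ENNReal.inv_le_one.2 (by exact_mod_cast Nat.one_le_iff_ne_zero.2 hq))

lemma polyK_X : polyK F Polynomial.X = theta F :=
  Polynomial.eval₂_X _ _

lemma polyK_monomial (i : ℕ) (a : F) :
    polyK F (Polynomial.monomial i a) = HahnSeries.single (-(i : ℤ)) a := by
  rw [polyK, Polynomial.coe_eval₂RingHom, Polynomial.eval₂_monomial, theta,
    HahnSeries.single_pow, one_pow, HahnSeries.C_apply, HahnSeries.single_mul_single, mul_one]
  simp

lemma polyK_coeff_neg_natCast (P : Polynomial F) (i : ℕ) : (polyK F P).coeff (-i) = P.coeff i := by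
  induction P using Polynomial.induction_on' with
  | add P Q hP hQ => rw [map_add, HahnSeries.coeff_add, hP, hQ, Polynomial.coeff_add]
  | monomial k a =>
    rw [polyK_monomial, HahnSeries.coeff_single, Polynomial.coeff_monomial]
    simp only [neg_inj, Nat.cast_inj, eq_comm]

lemma polyK_eq_zero_of_Kabs_lt_one (hq : 1 < q) {P : Polynomial F} (h : Kabs q (polyK F P) < 1) :
    P = 0 := by
  ext i
  rw [← polyK_coeff_neg_natCast, Polynomial.coeff_zero]
  exact (Kabs_lt_one_iff hq).1 h _ (by omega)

lemma polyT_eq_coe_map (P : Polynomial (Polynomial F)) :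
    polyT F P = ((P.map (polyK F) : Polynomial (Kinf F)) : PowerSeries (Kinf F)) := by
  rw [← Polynomial.eval₂_C_X_eq_coe, Polynomial.eval₂_map]
  rfl

lemma coeffT_polyT (P : Polynomial (Polynomial F)) (k : ℕ) :
    coeffT F k (polyT F P) = polyK F (P.coeff k) := by
  rw [coeffT, polyT_eq_coe_map, Polynomial.coeff_coe, Polynomial.coeff_map]

lemma coeffT_sub (i : ℕ) (f g : TS F) : coeffT F i (f - g) = coeffT F i f - coeffT F i g :=
  map_sub _ f g

/-- The terms `θ^0, …, θ^d` of `x`; the coefficient of `θ^i` is `x.coeff (-i)`. -/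
def polyPart (d : ℕ) (x : Kinf F) : Polynomial F :=
  ∑ i ∈ Finset.range (d + 1), Polynomial.monomial i (x.coeff (-i))

lemma coeff_polyPart (d : ℕ) (x : Kinf F) (i : ℕ) :
    (polyPart d x).coeff i = if i ≤ d then x.coeff (-i) else 0 := by
  simp [polyPart, Polynomial.coeff_monomial]

lemma degree_polyPart_le (d : ℕ) (x : Kinf F) : (polyPart d x).degree ≤ d :=
  Polynomial.degree_le_iff_coeff_zero _ _ |>.2 fun i hi => by
    rw [coeff_polyPart, if_neg (by exact_mod_cast hi.not_ge)]

lemma Kabs_sub_polyK_polyPart_lt_one (hq : 1 < q) {d : ℕ} {x : Kinf F}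
    (hx : Kabs q x ≤ (q : ℝ≥0∞) ^ d) : Kabs q (x - polyK F (polyPart d x)) < 1 := by
  rw [← zpow_natCast, Kabs_le_zpow_iff hq] at hx
  rw [Kabs_lt_one_iff hq]
  intro z hz
  obtain ⟨i, rfl⟩ : ∃ i : ℕ, z = -i := ⟨(-z).toNat, by omega⟩
  rw [HahnSeries.coeff_sub, polyK_coeff_neg_natCast, coeff_polyPart]
  split_ifs with hi
  · exact sub_self _
  · rw [hx _ (by omega), sub_zero]

lemma one_sub_tt_mul_C_mul_geom (c : Kinf F) :
    (1 - tt F * PowerSeries.C c) * PowerSeries.mk (c ^ ·) = 1 := by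
  have h : PowerSeries.mk (c ^ ·) = PowerSeries.rescale c (PowerSeries.mk 1) := by
    simp [PowerSeries.rescale_mk]
  rw [h, tt, mul_comm PowerSeries.X, ← PowerSeries.rescale_X, ← map_one (PowerSeries.rescale c),
    ← map_sub, ← map_mul, mul_comm, PowerSeries.mk_one_mul_one_sub_eq_one, map_one]

lemma inv_one_sub_tt_mul_C_pow (c : Kinf F) (n : ℕ) :
    ((1 - tt F * PowerSeries.C c) ^ n)⁻¹ = PowerSeries.mk (c ^ ·) ^ n := by
  refine (PowerSeries.inv_eq_iff_mul_eq_one ?_).2 ?_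
  · simp [tt]
  · rw [← mul_pow, mul_comm, one_sub_tt_mul_C_mul_geom, one_pow]

end Laurent

section Gauss

variable {F : Type} [Field F] [Fintype F]

lemma Kabs_coeffT_le_gnorm (i : ℕ) (f : TS F) :
    Kabs (Fintype.card F) (coeffT F i f) ≤ gnorm F f :=
  le_iSup (fun j => Kabs (Fintype.card F) (coeffT F j f)) i

lemma gnorm_le_iff {f : TS F} {c : ℝ≥0∞} :
    gnorm F f ≤ c ↔ ∀ i, Kabs (Fintype.card F) (coeffT F i f) ≤ c :=
  iSup_le_iff

lemma gnorm_lt_one_iff {f : TS F} :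
    gnorm F f < 1 ↔ ∀ i, Kabs (Fintype.card F) (coeffT F i f) < 1 := by
  refine ⟨fun h i => (Kabs_coeffT_le_gnorm i f).trans_lt h, fun h => ?_⟩
  refine lt_of_le_of_lt (gnorm_le_iff.2 fun i => Kabs_le_inv_of_lt_one Fintype.one_lt_card (h i)) ?_
  exact ENNReal.inv_lt_one.2 (by exact_mod_cast Fintype.one_lt_card)

lemma gnorm_neg (f : TS F) : gnorm F (-f) = gnorm F f := by
  simp only [gnorm, coeffT, map_neg, Kabs_neg]

lemma gnorm_sub_comm (f g : TS F) : gnorm F (f - g) = gnorm F (g - f) := by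
  rw [← neg_sub, gnorm_neg]

lemma isNonarchimedean_gnorm : IsNonarchimedean (gnorm F) := fun f g =>
  gnorm_le_iff.2 fun i => by
    rw [coeffT, map_add]
    exact (isNonarchimedean_Kabs Fintype.one_lt_card _ _).trans
      (sup_le_sup (Kabs_coeffT_le_gnorm i f) (Kabs_coeffT_le_gnorm i g))

lemma gnorm_sub_lt_one_trans {f g h : TS F} (hfg : gnorm F (f - g) < 1)
    (hgh : gnorm F (g - h) < 1) : gnorm F (f - h) < 1 := by
  rw [← sub_add_sub_cancel f g h]
  exact (isNonarchimedean_gnorm _ _).trans_lt (max_lt hfg hgh)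

lemma gnorm_le_of_gnorm_sub_lt_one {f g : TS F} {c : ℝ≥0∞} (hg : gnorm F g ≤ c) (hc : 1 ≤ c)
    (h : gnorm F (f - g) < 1) : gnorm F f ≤ c := by
  rw [← sub_add_cancel f g]
  exact (isNonarchimedean_gnorm _ _).trans (sup_le (h.le.trans hc) hg)

lemma gnorm_C (c : Kinf F) : gnorm F (PowerSeries.C c) = Kabs (Fintype.card F) c := by
  refine le_antisymm (gnorm_le_iff.2 fun i => ?_) ?_
  · rw [coeffT, PowerSeries.coeff_C]
    split_ifs
    · exact le_rfl
    · rw [Kabs_zero]; exact zero_le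
  · simpa [coeffT] using Kabs_coeffT_le_gnorm 0 (PowerSeries.C c)

lemma gnorm_one : gnorm F (1 : TS F) = 1 := by
  rw [← map_one PowerSeries.C, gnorm_C, Kabs_one]

lemma gnorm_mul_le (f g : TS F) : gnorm F (f * g) ≤ gnorm F f * gnorm F g := by
  refine gnorm_le_iff.2 fun i => ?_
  rw [coeffT, PowerSeries.coeff_mul]
  have hna := isNonarchimedean_Kabs (R := F) (Fintype.one_lt_card (α := F))
  obtain ⟨ij, -, hij⟩ := hna.finset_image_add_of_nonempty
    (fun ij : ℕ × ℕ => PowerSeries.coeff ij.1 f * PowerSeries.coeff ij.2 g)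
    ⟨(0, i), Finset.HasAntidiagonal.mem_antidiagonal.2 (zero_add i)⟩
  rw [Kabs_mul Fintype.card_ne_zero] at hij
  exact hij.trans (mul_le_mul' (Kabs_coeffT_le_gnorm _ f) (Kabs_coeffT_le_gnorm _ g))

lemma gnorm_pow_le (f : TS F) (k : ℕ) : gnorm F (f ^ k) ≤ gnorm F f ^ k := by
  induction k with
  | zero => rw [pow_zero, pow_zero, gnorm_one]
  | succ k ih => rw [pow_succ, pow_succ]; exact (gnorm_mul_le _ _).trans (mul_le_mul' ih le_rfl)

lemma gnorm_pow_ringChar_sub_lt_one {f g : TS F} (h : gnorm F (f - g) < 1) :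
    gnorm F (f ^ ringChar F - g ^ ringChar F) < 1 := by
  have hp : (ringChar F).Prime := CharP.char_is_prime F _
  have : Fact (ringChar F).Prime := ⟨hp⟩
  have : CharP (TS F) (ringChar F) := charP_of_injective_algebraMap' F _
  rw [← sub_pow_char]
  exact (gnorm_pow_le _ _).trans_lt (pow_lt_one₀ zero_le h hp.ne_zero)

lemma TT.eventually_gnorm_sub_lt_one {s : ℕ → TS F} {L : TS F} (h : TT F s L) :
    ∀ᶠ N in atTop, gnorm F (L - s N) < 1 :=
  h.eventually_lt_const zero_lt_one

end Gauss

section Polynomials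

variable {F : Type} [Field F] [Fintype F]

lemma polyT_eq_zero_of_gnorm_lt_one {P : Polynomial (Polynomial F)}
    (h : gnorm F (polyT F P) < 1) : P = 0 := by
  ext1 k
  refine polyK_eq_zero_of_Kabs_lt_one (Fintype.one_lt_card (α := F)) ?_
  rw [← coeffT_polyT]
  exact gnorm_lt_one_iff.1 h k

lemma eq_of_mem_PolyTT_of_gnorm_sub_lt_one {f g₁ g₂ : TS F} (h₁ : g₁ ∈ PolyTT F)
    (h₂ : g₂ ∈ PolyTT F) (hf₁ : gnorm F (g₁ - f) < 1) (hf₂ : gnorm F (g₂ - f) < 1) : g₁ = g₂ := by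
  obtain ⟨P₁, rfl⟩ := h₁
  obtain ⟨P₂, rfl⟩ := h₂
  have h : gnorm F (polyT F (P₁ - P₂)) < 1 := by
    rw [map_sub]
    exact gnorm_sub_lt_one_trans hf₁ (by rwa [gnorm_sub_comm])
  rw [sub_eq_zero.1 (polyT_eq_zero_of_gnorm_lt_one h)]

lemma exists_polyT_gnorm_sub_lt_one {f : TS F} (hf : IsTate F f) {d : ℕ}
    (hd : gnorm F f ≤ (Fintype.card F : ℝ≥0∞) ^ d) :
    ∃ P : Polynomial (Polynomial F),
      (∀ i, (P.coeff i).degree ≤ d) ∧ gnorm F (polyT F P - f) < 1 := by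
  obtain ⟨K, hK⟩ := eventually_atTop.1 (hf.eventually_lt_const zero_lt_one)
  set P : Polynomial (Polynomial F) :=
    ∑ k ∈ Finset.range K, Polynomial.monomial k (polyPart d (coeffT F k f))
  have hP : ∀ k, P.coeff k = if k < K then polyPart d (coeffT F k f) else 0 := fun k => by
    simp [P, Polynomial.coeff_monomial]
  refine ⟨P, fun k => ?_, gnorm_lt_one_iff.2 fun k => ?_⟩
  · rw [hP]
    split_ifs
    · exact degree_polyPart_le d _
    · exact Polynomial.degree_zero.trans_le bot_le
  · rw [coeffT_sub, coeffT_polyT, hP, Kabs_sub_comm]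
    split_ifs with hk
    · exact Kabs_sub_polyK_polyPart_lt_one Fintype.one_lt_card
        ((Kabs_coeffT_le_gnorm k f).trans hd)
    · simpa using hK k (not_lt.1 hk)

end Polynomials

section Omega

variable {F : Type} [Field F] [Fintype F]

lemma gnorm_geom_le_one {c : Kinf F} (hc : Kabs (Fintype.card F) c ≤ 1) :
    gnorm F (PowerSeries.mk (c ^ ·)) ≤ 1 :=
  gnorm_le_iff.2 fun i => by
    rw [coeffT, PowerSeries.coeff_mk, Kabs_pow Fintype.card_ne_zero]
    exact pow_le_one₀ zero_le hc

lemma gnorm_omegaPartial_le (n m N : ℕ) :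
    gnorm F (omegaPartial F n m N) ≤ (Fintype.card F : ℝ≥0∞) ^ m := by
  have hfactor : ∀ i ∈ Finset.range N, gnorm F
      ((1 - tt F * PowerSeries.C ((theta F)⁻¹ ^ Fintype.card F ^ i)) ^ n)⁻¹ ≤ 1 := fun i _ => by
    rw [inv_one_sub_tt_mul_C_pow]
    exact (gnorm_pow_le _ _).trans
      (pow_le_one₀ zero_le (gnorm_geom_le_one (Kabs_theta_inv_pow_le_one Fintype.card_ne_zero _)))
  have hprod := (Finset.le_prod_of_submultiplicative (gnorm F) gnorm_one.le gnorm_mul_le _ _).trans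
    (Finset.prod_le_one' hfactor)
  calc gnorm F (omegaPartial F n m N)
      ≤ gnorm F (PowerSeries.C ((-theta F) ^ m)) * 1 :=
        (gnorm_mul_le _ _).trans (mul_le_mul' le_rfl hprod)
    _ = (Fintype.card F : ℝ≥0∞) ^ m := by
      rw [mul_one, gnorm_C, Kabs_pow Fintype.card_ne_zero, Kabs_neg, Kabs_theta]

lemma constantCoeff_omegaPartial (n m N : ℕ) :
    PowerSeries.constantCoeff (omegaPartial F n m N) = (-theta F) ^ m := by
  simp [omegaPartial, tt]

lemma omegaPartial_mul_left (p n m N : ℕ) :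
    omegaPartial F (p * n) (p * m) N = omegaPartial F n m N ^ p := by
  simp only [omegaPartial, inv_one_sub_tt_mul_C_pow, mul_pow, ← Finset.prod_pow, ← map_pow,
    ← pow_mul, mul_comm p]

lemma coeff_zero_eq_of_gnorm_polyT_sub_omegaPartial_lt_one {n m N : ℕ}
    {P : Polynomial (Polynomial F)} (h : gnorm F (polyT F P - omegaPartial F n m N) < 1) :
    P.coeff 0 = (-Polynomial.X) ^ m := by
  refine sub_eq_zero.1 (polyK_eq_zero_of_Kabs_lt_one (Fintype.one_lt_card (α := F)) ?_)
  have h0 := gnorm_lt_one_iff.1 h 0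
  rwa [coeffT_sub, coeffT_polyT, coeffT, PowerSeries.coeff_zero_eq_constantCoeff_apply,
    constantCoeff_omegaPartial, ← polyK_X, ← map_neg, ← map_pow, ← map_sub] at h0

end Omega

variable (F : Type) [Field F] [Fintype F]

theorem statement13 (p n m : ℕ) (hp : p = ringChar F)
    (ω : TS F) (hω : IsTate F ω) (hωc : TT F (omegaPartial F n m) ω)
    (ωp : TS F) (hωpc : TT F (omegaPartial F (p * n) (p * m)) ωp) :
    ∃ g ∈ PolyTT F, gnorm F (g - ω) < 1 ∧
      -- uniqueness
      (∀ g' ∈ PolyTT F, gnorm F (g' - ω) < 1 → g' = g) ∧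
      -- `deg_θ g = m`
      (∃ P : Polynomial (Polynomial F), g = polyT F P ∧
        (∀ i, (P.coeff i).degree ≤ (m : ℕ)) ∧ (∃ i, (P.coeff i).degree = (m : ℕ))) ∧
      -- `g_{pn} = (g_n)^p`
      (∀ gp ∈ PolyTT F, gnorm F (gp - ωp) < 1 → gp = g ^ p) := by
  subst hp
  obtain ⟨N, hN, hNp⟩ :=
    (hωc.eventually_gnorm_sub_lt_one.and hωpc.eventually_gnorm_sub_lt_one).exists
  rw [omegaPartial_mul_left] at hNp
  obtain ⟨P, hPdeg, hP⟩ := exists_polyT_gnorm_sub_lt_one hω <|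
    gnorm_le_of_gnorm_sub_lt_one (gnorm_omegaPartial_le n m N)
      (one_le_pow₀ (by exact_mod_cast Fintype.card_pos)) hN
  have hPN := gnorm_sub_lt_one_trans hP hN
  refine ⟨polyT F P, ⟨P, rfl⟩, hP,
    fun g' hg' h' => eq_of_mem_PolyTT_of_gnorm_sub_lt_one hg' ⟨P, rfl⟩ h' hP,
    ⟨P, rfl, hPdeg, 0, ?_⟩, fun gp hgp h' => ?_⟩
  · rw [coeff_zero_eq_of_gnorm_polyT_sub_omegaPartial_lt_one hPN, Polynomial.degree_pow,
      Polynomial.degree_neg, Polynomial.degree_X, nsmul_one]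
  · refine eq_of_mem_PolyTT_of_gnorm_sub_lt_one hgp ⟨P ^ ringChar F, map_pow _ _ _⟩ h' ?_
    exact gnorm_sub_lt_one_trans (gnorm_pow_ringChar_sub_lt_one hPN)
      (by rwa [gnorm_sub_comm])

end Carlitz
end
end

section
/- For every integer n ≥ 1, writing n = h(q−1) + δ with integers h ≥ 0 and 0 ≤ δ < q−1, one has the identity of formal power series in x over 𝔽[t]: Z(x,−n) = 1 − x·∑_{i=0}^{h−1} C(n, i(q−1)+δ)·t^{i(q−1)+δ}·Z(x, −(i(q−1)+δ)), where C(n,k) denotes the image in 𝔽 of the binomial coefficient (n choose k). -/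
open scoped Classical ENNReal
open Filter

noncomputable section

namespace Carlitz

variable (F : Type) [Field F] [Fintype F]

/-- `S_d(n) = ∑_{a monic, deg a = d} aⁿ ∈ 𝔽[t]`: a monic polynomial of degree `d` is
`X^d + ∑_{i<d} c_i X^i` for a unique tuple of coefficients `c`. -/
def Sd (n d : ℕ) : Polynomial F :=
  ∑ c : Fin d → F,
    (Polynomial.X ^ d + ∑ i : Fin d, Polynomial.C (c i) * Polynomial.X ^ (i : ℕ)) ^ n

/-- `Z(x,−n) = ∑_{d≥0} S_d(n)·x^d ∈ 𝔽[t][[x]]`. -/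
def Z (n : ℕ) : PowerSeries (Polynomial F) := PowerSeries.mk fun d => Sd F n d

/-!
A monic polynomial of degree `d + 1` is uniquely `t·b + c` with `b` monic of degree `d` and
`c ∈ 𝔽`. Expanding `(t·b + c)ⁿ` binomially and summing over `c` first, the power sum
`∑_{c ∈ 𝔽} c^m` is `-1` when `m > 0` and `q - 1 ∣ m`, and `0` otherwise. So only the terms
with `n - k` a positive multiple of `q - 1`, i.e. `k = i(q-1) + δ` with `i < h`, survive, and
they give `S_{d+1}(n) = -∑_{i<h} C(n,k) tᵏ S_d(k)`.
-/
section PowerSums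

variable {K : Type*} [Field K] [Fintype K]

theorem sum_pow_eq_ite (m : ℕ) :
    ∑ c : K, c ^ m = if m ≠ 0 ∧ Fintype.card K - 1 ∣ m then -1 else 0 := by
  rcases eq_or_ne m 0 with rfl | hm
  · simp
  rw [Fintype.sum_eq_add_sum_subtype_ne _ 0, zero_pow hm, zero_add,
    ← Fintype.sum_equiv unitsEquivNeZero (fun x : Kˣ ↦ (x : K) ^ m) _ (fun _ ↦ rfl),
    FiniteField.sum_pow_units]
  simp [hm]

end PowerSums

theorem filter_range_succ_sub_dvd_eq_image {e n h δ : ℕ} (hn : n = h * e + δ) (hδ : δ < e) :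
    (Finset.range (n + 1)).filter (fun k ↦ n - k ≠ 0 ∧ e ∣ n - k)
      = (Finset.range h).image (fun i ↦ i * e + δ) := by
  subst hn
  ext k
  simp only [Finset.mem_filter, Finset.mem_range, Finset.mem_image]
  constructor
  · rintro ⟨hk, hk0, j, hj⟩
    rw [mul_comm e j] at hj
    have hj0 : j ≠ 0 := by rintro rfl; omega
    have hjh : j ≤ h := by
      by_contra! hlt
      have := Nat.mul_le_mul_right e (Nat.succ_le_of_lt hlt)
      rw [Nat.succ_mul] at this
      omega
    have := Nat.mul_le_mul_right e hjh
    refine ⟨h - j, by omega, ?_⟩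
    rw [Nat.sub_mul]
    omega
  · rintro ⟨i, hi, rfl⟩
    have := Nat.mul_le_mul_right e hi.le
    have hsub : h * e + δ - (i * e + δ) = (h - i) * e := by
      rw [Nat.sub_mul]
      omega
    rw [hsub]
    exact ⟨by omega, Nat.mul_ne_zero (by omega) (by omega), dvd_mul_left e _⟩

section MonicPolynomials

open Polynomial

variable {R : Type*} [CommSemiring R]

def monicOfCoeffs {d : ℕ} (c : Fin d → R) : R[X] :=
  X ^ d + ∑ i : Fin d, C (c i) * X ^ (i : ℕ)

theorem monicOfCoeffs_cons (d : ℕ) (c₀ : R) (b : Fin d → R) :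
    monicOfCoeffs (Fin.cons c₀ b : Fin (d + 1) → R) = X * monicOfCoeffs b + C c₀ := by
  simp only [monicOfCoeffs, Fin.sum_univ_succ, Fin.cons_zero, Fin.cons_succ, Fin.val_succ,
    Fin.val_zero, pow_zero, mul_one, mul_add, Finset.mul_sum, pow_succ]
  ring_nf

end MonicPolynomials

theorem Sd_eq_sum_monicOfCoeffs (n d : ℕ) :
    Sd F n d = ∑ c : Fin d → F, monicOfCoeffs c ^ n := rfl

theorem Sd_zero (n : ℕ) : Sd F n 0 = 1 := by
  simp [Sd]

open Polynomial in
theorem Sd_succ (n d : ℕ) :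
    Sd F n (d + 1) = ∑ k ∈ Finset.range (n + 1),
      C (∑ c : F, c ^ (n - k)) * (C (n.choose k : F) * X ^ k * Sd F k d) := by
  have hcons : Sd F n (d + 1) =
      ∑ c₀ : F, ∑ b : Fin d → F, (X * monicOfCoeffs b + C c₀) ^ n := by
    rw [Sd_eq_sum_monicOfCoeffs, ← (Fin.consEquiv fun _ ↦ F).sum_comp, Fintype.sum_prod_type]
    simp only [Fin.consEquiv, Equiv.coe_fn_mk, monicOfCoeffs_cons]
  rw [hcons]
  simp only [add_pow, Finset.sum_comm (s := Finset.univ) (t := Finset.range (n + 1))]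
  refine Finset.sum_congr rfl fun k _ ↦ ?_
  rw [Sd_eq_sum_monicOfCoeffs, Finset.mul_sum, map_sum, Finset.sum_mul_sum]
  refine Fintype.sum_congr _ _ fun c₀ ↦ Fintype.sum_congr _ _ fun b ↦ ?_
  rw [← map_natCast (C : F →+* F[X]), map_pow]
  ring

open Polynomial in
theorem Sd_succ_eq_neg_sum {n h δ : ℕ} (hdiv : n = h * (Fintype.card F - 1) + δ)
    (hδ : δ < Fintype.card F - 1) (d : ℕ) :
    Sd F n (d + 1) = -∑ i ∈ Finset.range h,
      C (n.choose (i * (Fintype.card F - 1) + δ) : F) * X ^ (i * (Fintype.card F - 1) + δ) *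
        Sd F (i * (Fintype.card F - 1) + δ) d := by
  have hinj : Set.InjOn (fun i ↦ i * (Fintype.card F - 1) + δ) (Finset.range h) :=
    fun i _ j _ hij ↦ Nat.eq_of_mul_eq_mul_right (by omega) (Nat.add_right_cancel hij)
  simp only [Sd_succ, sum_pow_eq_ite, apply_ite C, map_neg, map_one, map_zero, ite_mul,
    neg_one_mul, zero_mul]
  rw [← Finset.sum_filter, filter_range_succ_sub_dvd_eq_image hdiv hδ,
    Finset.sum_image hinj, Finset.sum_neg_distrib]

theorem statement17 (q n h δ : ℕ) (hq : q = Fintype.card F)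
    (hdiv : n = h * (q - 1) + δ) (hδ : δ < q - 1) :
    Z F n = 1 - PowerSeries.X * ∑ i ∈ Finset.range h,
      PowerSeries.C (R := Polynomial F)
          (Polynomial.C ((n.choose (i * (q - 1) + δ) : ℕ) : F)
            * Polynomial.X ^ (i * (q - 1) + δ))
        * Z F (i * (q - 1) + δ) := by
  subst hq
  refine PowerSeries.ext fun d ↦ ?_
  cases d with
  | zero => simp [Z, Sd_zero]
  | succ d =>
    simp only [Z, map_sub, map_sum, PowerSeries.coeff_mk, PowerSeries.coeff_one,
      PowerSeries.coeff_succ_X_mul, PowerSeries.coeff_C_mul, Sd_succ_eq_neg_sum F hdiv hδ]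
    simp

end Carlitz
end
end
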